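/- Rotation preserves domain cardinality and, for trees related by rotation, every child of a node in one tree corresponds under the rotation map to a neighbor (child or parent) of the image node; consequently, if t ∼_r u and both t and u are trees, then any simple path in t maps under r to a simple path in u of the same length. -/

import Mathlib

open scoped Classical

/-- Positions in a tree: finite sequences of natural numbers. -/
abbrev Pos := List ℕ

/-- A tree over an alphabet `A`: a finite partial function from positions to `A`
whose domain is prefix-closed and closed under taking smaller sibling indices. -/
structure PTree (A : Type) where
  f : Pos → Option A
  fin : {p : Pos | f p ≠ none}.Finite
  prefixClosed : ∀ (p : Pos) (i : ℕ), f (p ++ [i]) ≠ none → f p ≠ none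
  childClosed : ∀ (p : Pos) (i j : ℕ), j < i → f (p ++ [i]) ≠ none → f (p ++ [j]) ≠ none

namespace PTree

/-- Domain of a tree. -/
def dom {A : Type} (t : PTree A) : Set Pos := {p | t.f p ≠ none}

/-- The maximal direction `N` such that some position `p.N` is in the domain. -/
noncomputable def maxDir {A : Type} (t : PTree A) : ℕ :=
  sSup {i | ∃ p, p ++ [i] ∈ t.dom}

/-- The direction alphabet `D(t) = {-1, 0, …, N}`. -/
noncomputable def dirs {A : Type} (t : PTree A) : Set ℤ :=
  {e | e = -1 ∨ (0 ≤ e ∧ e ≤ (t.maxDir : ℤ))}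

/-- Moving from position `p` in direction `e`: `-1` is the parent direction
(`(p.i).(-1) = p`), a non-negative direction `e` leads to the child `p.e`. -/
def step (p : Pos) (e : ℤ) : Pos :=
  if e = -1 then p.dropLast else p ++ [e.toNat]

/-- `t ∼_r u`: `u` is a rotation of `t` via the bijection `r`. -/
noncomputable def IsRotation {A B : Type} (t : PTree A) (u : PTree B) (r : Pos → Pos) : Prop :=
  Set.BijOn r t.dom u.dom ∧
  ∀ p ∈ t.dom, ∀ d : ℕ, (p ++ [d]) ∈ t.dom →
    ∃ e ∈ u.dirs, r (p ++ [d]) = step (r p) e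

/-- A simple path in a tree: pairwise distinct positions, each obtained from the
previous one by moving in a direction from `D(t) ∪ {-1}`. -/
noncomputable def IsPath {A : Type} (t : PTree A) (ps : List Pos) : Prop :=
  ps.Nodup ∧ (∀ q ∈ ps, q ∈ t.dom) ∧
  ps.Chain' (fun a b => ∃ e ∈ t.dirs, b = step a e)

end PTree

theorem List.IsChain.map_of_nodup {α β : Type*} {R : α → α → Prop} {S : β → β → Prop}
    (f : α → β) {l : List α} (hl : l.Nodup)
    (H : ∀ a ∈ l, ∀ b ∈ l, a ≠ b → R a b → S (f a) (f b)) (hc : l.IsChain R) :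
    (l.map f).IsChain S := by
  rw [List.isChain_map]
  induction hc with
  | nil => exact .nil
  | singleton => exact .singleton _
  | cons_cons hab hc ih =>
    refine .cons_cons (H _ (by simp) _ (by simp) (by simp_all) hab) (ih hl.of_cons ?_)
    grind

namespace PTree

variable {A B : Type}

def Adj (t : PTree A) (p q : Pos) : Prop :=
  ∃ e ∈ t.dirs, q = step p e

@[simp]
lemma step_neg_one (p : Pos) : step p (-1) = p.dropLast :=
  if_pos rfl

@[simp]
lemma step_natCast (p : Pos) (n : ℕ) : step p n = p ++ [n] := by
  simp [step]

lemma le_maxDir (t : PTree A) {p : Pos} {i : ℕ} (h : p ++ [i] ∈ t.dom) : i ≤ t.maxDir := by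
  have hfin : {i | ∃ p, p ++ [i] ∈ t.dom}.Finite :=
    (t.fin.image fun q => q.getLastD 0).subset fun i ⟨q, hq⟩ => ⟨q ++ [i], hq, by simp⟩
  exact le_csSup hfin.bddAbove ⟨p, h⟩

lemma adj_append (t : PTree A) {p : Pos} {i : ℕ} (h : p ++ [i] ∈ t.dom) :
    t.Adj p (p ++ [i]) :=
  ⟨i, Or.inr ⟨Int.natCast_nonneg i, Int.ofNat_le.2 (t.le_maxDir h)⟩, (step_natCast p i).symm⟩

lemma adj_dropLast (t : PTree A) (p : Pos) : t.Adj p p.dropLast :=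
  ⟨-1, Or.inl rfl, (step_neg_one p).symm⟩

lemma Adj.eq_dropLast_or_exists_eq_append {t : PTree A} {p q : Pos} (h : t.Adj p q) :
    q = p.dropLast ∨ ∃ i : ℕ, q = p ++ [i] := by
  obtain ⟨e, he | ⟨he, -⟩, rfl⟩ := h
  · exact .inl (he ▸ step_neg_one p)
  · exact .inr ⟨e.toNat, by rw [← step_natCast, Int.toNat_of_nonneg he]⟩

lemma Adj.symm {t : PTree A} {p q : Pos} (hp : p ∈ t.dom) (hne : p ≠ q) (h : t.Adj p q) :
    t.Adj q p := by
  rcases h.eq_dropLast_or_exists_eq_append with rfl | ⟨i, rfl⟩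
  · obtain ⟨q, i, rfl⟩ := p.eq_nil_or_concat'.resolve_left fun hp => hne (hp ▸ rfl)
    simpa using t.adj_append hp
  · simpa using t.adj_dropLast (p ++ [i])

namespace IsRotation

variable {t : PTree A} {u : PTree B} {r : Pos → Pos}

lemma adj_map (h : IsRotation t u r) {p q : Pos} (hp : p ∈ t.dom) (hq : q ∈ t.dom)
    (hne : p ≠ q) (hpq : t.Adj p q) : u.Adj (r p) (r q) := by
  rcases hpq.eq_dropLast_or_exists_eq_append with rfl | ⟨d, rfl⟩
  · obtain ⟨q, d, rfl⟩ := p.eq_nil_or_concat'.resolve_left fun hp => hne (hp ▸ rfl)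
    rw [List.dropLast_concat] at hq hne ⊢
    -- `p` is a child of `q`, so `r p` is a neighbour of `r q`; reverse that step in `u`.
    exact Adj.symm (h.1.mapsTo hq) (fun heq => hne (h.1.injOn hq hp heq).symm) (h.2 q hq d hp)
  · exact h.2 p hp d hq

lemma isPath_map (h : IsRotation t u r) {ps : List Pos} (hps : t.IsPath ps) :
    u.IsPath (ps.map r) := by
  obtain ⟨hnodup, hdom, hchain⟩ := hps
  refine ⟨hnodup.map_on fun p hp q hq => h.1.injOn (hdom p hp) (hdom q hq), ?_, ?_⟩
  · simpa using fun p hp => h.1.mapsTo (hdom p hp)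
  · exact hchain.map_of_nodup r hnodup fun p hp q hq => h.adj_map (hdom p hp) (hdom q hq)

end IsRotation

end PTree

/-- Rotations preserve the cardinality of the domain, map children
to neighbours, and consequently map simple paths to simple paths of the same
length. -/
theorem rotation_preserves_paths {A B : Type} (t : PTree A) (u : PTree B)
    (r : Pos → Pos) (h : PTree.IsRotation t u r) :
    t.dom.ncard = u.dom.ncard ∧
    (∀ p ∈ t.dom, ∀ d : ℕ, p ++ [d] ∈ t.dom →
      ∃ e ∈ u.dirs, r (p ++ [d]) = PTree.step (r p) e) ∧
    (∀ ps : List Pos, PTree.IsPath t ps →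
      PTree.IsPath u (ps.map r) ∧ (ps.map r).length = ps.length) :=
  ⟨h.1.ncard_eq, h.2, fun _ hps => ⟨h.isPath_map hps, List.length_map _⟩⟩
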